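/- There are exactly 80 group homomorphisms φ: B → S₃ such that φ(σ) is the fixed transposition (1 2), and the image of φ is a transitive subgroup of S₃. -/

import Mathlib

/-- Generators of the braid group `B₂(C₂)` in Bellingeri's presentation. -/
inductive Gen : Type
  | a1 | a2 | b1 | b2 | s
  deriving DecidableEq

namespace Braid

open FreeGroup

abbrev A1 : FreeGroup Gen := FreeGroup.of Gen.a1
abbrev A2 : FreeGroup Gen := FreeGroup.of Gen.a2
abbrev B1 : FreeGroup Gen := FreeGroup.of Gen.b1
abbrev B2 : FreeGroup Gen := FreeGroup.of Gen.b2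
abbrev Sg : FreeGroup Gen := FreeGroup.of Gen.s

/-- The eleven relations (R2), (R3), (R4), (TR) of Bellingeri's presentation,
written as words that are set equal to `1`. -/
def rels : Set (FreeGroup Gen) :=
  { Sg⁻¹ * A1 * Sg⁻¹ * A1 * (A1 * Sg⁻¹ * A1 * Sg⁻¹)⁻¹,
    Sg⁻¹ * A2 * Sg⁻¹ * A2 * (A2 * Sg⁻¹ * A2 * Sg⁻¹)⁻¹,
    Sg⁻¹ * B1 * Sg⁻¹ * B1 * (B1 * Sg⁻¹ * B1 * Sg⁻¹)⁻¹,
    Sg⁻¹ * B2 * Sg⁻¹ * B2 * (B2 * Sg⁻¹ * B2 * Sg⁻¹)⁻¹,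
    Sg⁻¹ * A1 * Sg * A2 * (A2 * Sg⁻¹ * A1 * Sg)⁻¹,
    Sg⁻¹ * B1 * Sg * B2 * (B2 * Sg⁻¹ * B1 * Sg)⁻¹,
    Sg⁻¹ * A1 * Sg * B2 * (B2 * Sg⁻¹ * A1 * Sg)⁻¹,
    Sg⁻¹ * B1 * Sg * A2 * (A2 * Sg⁻¹ * B1 * Sg)⁻¹,
    Sg⁻¹ * A1 * Sg⁻¹ * B1 * (B1 * Sg⁻¹ * A1 * Sg)⁻¹,
    Sg⁻¹ * A2 * Sg⁻¹ * B2 * (B2 * Sg⁻¹ * A2 * Sg)⁻¹,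
    (A1 * B1⁻¹ * A1⁻¹ * B1) * (A2 * B2⁻¹ * A2⁻¹ * B2) * (Sg * Sg)⁻¹ }

/-- The group `B`, isomorphic to the braid group `B₂(C₂)` on two strings
on a genus `2` surface. -/
abbrev B : Type := PresentedGroup rels

/-- The image of the generator `σ` in `B`. -/
def σB : B := PresentedGroup.of Gen.s

/-- A generic monodromy representation of `B` in `Sₙ`: a homomorphism
`φ : B → Sₙ` such that `φ(σ)` is a transposition and the image of `φ` is a
transitive subgroup of `Sₙ`. -/
def IsGeneric (n : ℕ) (φ : B →* Equiv.Perm (Fin n)) : Prop :=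
  (φ σB).IsSwap ∧ ∀ i j : Fin n, ∃ g : B, φ g i = j

end Braid

/-!
A homomorphism `B → S₃` is the same as an assignment of the generators satisfying the eleven
relations. Fixing `σ ↦ (0 1)` leaves `6⁴` candidate images of `a₁, a₂, b₁, b₂`, which are checked by
computation. As the image contains `(0 1)`, it is transitive exactly when it does not fix `2`, that
is, when some generator moves `2`.
-/

open Braid Equiv

namespace PresentedGroup

variable {α G : Type*} [Group G] {rels : Set (FreeGroup α)}

theorem lift_comp_of_eq_one (φ : PresentedGroup rels →* G) {r : FreeGroup α} (hr : r ∈ rels) :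
    FreeGroup.lift (φ ∘ of) r = 1 := by
  have h : FreeGroup.lift (φ ∘ of) = φ.comp (mk rels) :=
    FreeGroup.ext_hom _ _ fun _ => FreeGroup.lift_apply_of
  rw [h, MonoidHom.comp_apply, one_of_mem hr, map_one]

theorem apply_eq_self_of_forall_of {X : Type*} (φ : PresentedGroup rels →* Perm X) {p : X}
    (h : ∀ x, φ (of x) p = p) (g : PresentedGroup rels) : φ g p = p :=
  generated_by rels ((MulAction.stabilizer (Perm X) p).comap φ) h g

end PresentedGroup

theorem Equiv.Perm.exists_mem_apply_eq_of_swap_mem {H : Subgroup (Perm (Fin 3))}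
    (hs : swap 0 1 ∈ H) {t : Perm (Fin 3)} (ht : t ∈ H) (ht2 : t 2 ≠ 2) (i j : Fin 3) :
    ∃ g ∈ H, g i = j := by
  -- `t` or `(0 1) t` carries `2` to any point of `{0, 1}`; the inverses carry it back.
  have words : ∀ t : Perm (Fin 3), t 2 ≠ 2 → ∀ i j : Fin 3,
      ∃ w ∈ [1, swap 0 1, t, t⁻¹, swap 0 1 * t, t⁻¹ * swap 0 1], w i = j := by
    decide
  have words_mem : ∀ w ∈ [1, swap 0 1, t, t⁻¹, swap 0 1 * t, t⁻¹ * swap 0 1], w ∈ H := by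
    simp [hs, ht, mul_mem]
  obtain ⟨w, hw, hwij⟩ := words t ht2 i j
  exact ⟨w, words_mem w hw, hwij⟩

namespace Braid

instance : Fintype Gen :=
  ⟨{.a1, .a2, .b1, .b2, .s}, fun x => by cases x <;> decide⟩

def genImage (v : Perm (Fin 3) × Perm (Fin 3) × Perm (Fin 3) × Perm (Fin 3)) : Gen → Perm (Fin 3)
  | .a1 => v.1
  | .a2 => v.2.1
  | .b1 => v.2.2.1
  | .b2 => v.2.2.2
  | .s => swap 0 1

def genTuple (φ : B →* Perm (Fin 3)) : Perm (Fin 3) × Perm (Fin 3) × Perm (Fin 3) × Perm (Fin 3) :=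
  (φ (.of .a1), φ (.of .a2), φ (.of .b1), φ (.of .b2))

def IsTransitiveSolution (v : Perm (Fin 3) × Perm (Fin 3) × Perm (Fin 3) × Perm (Fin 3)) : Prop :=
  (∀ r ∈ rels, FreeGroup.lift (genImage v) r = 1) ∧ ∃ x, genImage v x 2 ≠ 2

theorem genImage_genTuple {φ : B →* Perm (Fin 3)} (hσ : φ σB = swap 0 1) :
    genImage (genTuple φ) = φ ∘ PresentedGroup.of := by
  funext x
  cases x
  case s => exact hσ.symm
  all_goals rfl

theorem genTuple_injOn :
    Set.InjOn genTuple {φ : B →* Perm (Fin 3) | φ σB = swap 0 1} := by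
  intro φ hφ ψ hψ h
  have hgen : φ ∘ PresentedGroup.of = ψ ∘ PresentedGroup.of := by
    rw [← genImage_genTuple hφ, ← genImage_genTuple hψ, h]
  exact PresentedGroup.ext (congrFun hgen)

theorem genTuple_image :
    genTuple '' {φ : B →* Perm (Fin 3) |
      φ σB = swap 0 1 ∧ ∀ i j : Fin 3, ∃ g : B, φ g i = j} = {v | IsTransitiveSolution v} := by
  ext v
  constructor
  · rintro ⟨φ, ⟨hσ, htrans⟩, rfl⟩
    rw [Set.mem_ofPred_eq, IsTransitiveSolution, genImage_genTuple hσ]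
    refine ⟨fun r hr => PresentedGroup.lift_comp_of_eq_one φ hr, ?_⟩
    by_contra! hfix
    obtain ⟨g, hg⟩ := htrans 2 0
    exact absurd (hg ▸ PresentedGroup.apply_eq_self_of_forall_of φ hfix g) (by decide)
  · rintro ⟨hrels, x, hx⟩
    let φ : B →* Perm (Fin 3) := PresentedGroup.toGroup hrels
    have hσ : φ σB = swap 0 1 := PresentedGroup.toGroup.of hrels
    refine ⟨φ, ⟨hσ, fun i j => ?_⟩, rfl⟩
    obtain ⟨_, ⟨g, rfl⟩, hg⟩ := Perm.exists_mem_apply_eq_of_swap_mem (H := φ.range)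
      ⟨σB, hσ⟩ ⟨.of x, rfl⟩ (by rwa [PresentedGroup.toGroup.of]) i j
    exact ⟨g, hg⟩

theorem ncard_isTransitiveSolution : {v | IsTransitiveSolution v}.ncard = 80 := by
  simp only [IsTransitiveSolution, rels, Set.forall_mem_insert, Set.mem_singleton_iff, forall_eq,
    map_mul, map_inv, FreeGroup.lift_apply_of, genImage]
  rw [Set.ncard_eq_toFinset_card', Set.toFinset_ofPred]
  decide +kernel

end Braid

/-- There are exactly 80 homomorphisms φ : B → S₃ with φ(σ) = (1 2) and
transitive image. -/
theorem stmt16 :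
    Set.ncard {φ : B →* Equiv.Perm (Fin 3) |
      φ σB = Equiv.swap 0 1 ∧ ∀ i j : Fin 3, ∃ g : B, φ g i = j} = 80 := by
  rw [← (genTuple_injOn.mono fun _ hφ => hφ.1).ncard_image, genTuple_image,
    ncard_isTransitiveSolution]
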